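/- arXiv:2204.07643 — 4 statements merged into one kernel-verified Lean document; each statement's English description precedes it below -/
import Mathlib

section
/- For every real σ with 0 < σ < 1, ζ(σ) ≠ 0; that is, the Riemann zeta function has no zeros on the real segment (0,1), and hence Riemann's ξ function ξ(s) = (1/2)s(s−1)π^{−s/2}Γ(s/2)ζ(s) does not vanish at any real point of the critical strip. -/
/-!
Pairing consecutive terms of the alternating series `η(s) = ∑ (-1)^(n-1) n^(-s)` gives a series
whose `k`-th term is `O(k^(-re s - 1))` by the mean value theorem, so `η` is holomorphic on
`re s > 0`. For `re s > 1`, splitting `ζ(s)` into odd and even terms gives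
`η(s) = (1 - 2^(1-s)) ζ(s)`, and this identity continues analytically to `re s > 0`. At a real
`σ > 0` every pair `(2k+1)^(-σ) - (2k+2)^(-σ)` is positive, so `η(σ) > 0`, whereas
`ζ(σ) = 0` would force `η(σ) = 0`.
-/

open Complex Topology Set

lemma norm_ofReal_cpow_neg_sub_le {a b : ℝ} (ha : 0 < a) (hab : a ≤ b) {s : ℂ}
    (hs : -1 ≤ s.re) :
    ‖(b : ℂ) ^ (-s) - (a : ℂ) ^ (-s)‖ ≤ ‖s‖ * a ^ (-s.re - 1) * (b - a) := by
  have hderiv : ∀ x ∈ Icc a b, HasDerivWithinAt (fun x : ℝ ↦ (x : ℂ) ^ (-s))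
      (-s * (x : ℂ) ^ (-s - 1)) (Icc a b) x := fun x hx ↦
    ((hasDerivAt_id (x : ℂ)).cpow_const
      (ofReal_mem_slitPlane.2 (ha.trans_le hx.1))).comp_ofReal.hasDerivWithinAt.congr_deriv
        (by simp)
  have hbound : ∀ x ∈ Ico a b, ‖-s * (x : ℂ) ^ (-s - 1)‖ ≤ ‖s‖ * a ^ (-s.re - 1) := by
    intro x hx
    rw [norm_mul, norm_neg, norm_cpow_eq_rpow_re_of_pos (ha.trans_le hx.1)]
    gcongr
    exact Real.rpow_le_rpow_of_nonpos ha hx.1 (by simp; linarith)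
  exact norm_image_sub_le_of_norm_deriv_le_segment' hderiv hbound b (right_mem_Icc.2 hab)

noncomputable def etaTerm (s : ℂ) (k : ℕ) : ℂ :=
  (2 * k + 1 : ℂ) ^ (-s) - (2 * k + 2 : ℂ) ^ (-s)

/-- The Dirichlet eta function, summed in pairs of consecutive terms. -/
noncomputable def dirichletEta (s : ℂ) : ℂ := ∑' k, etaTerm s k

lemma norm_etaTerm_le {s : ℂ} (hs : -1 ≤ s.re) (k : ℕ) :
    ‖etaTerm s k‖ ≤ ‖s‖ * (2 * k + 1 : ℝ) ^ (-s.re - 1) := by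
  have h := norm_ofReal_cpow_neg_sub_le (a := 2 * k + 1) (b := 2 * k + 2) (by positivity)
    (by linarith) hs
  rw [norm_sub_rev, add_sub_add_left_eq_sub, show (2 : ℝ) - 1 = 1 by norm_num, mul_one] at h
  simpa [etaTerm] using h

lemma summable_two_mul_add_one_rpow_neg {p : ℝ} (hp : 1 < p) :
    Summable fun k : ℕ ↦ (2 * k + 1 : ℝ) ^ (-p) := by
  have h := (Real.summable_nat_rpow.2 (by linarith : -p < -1)).comp_injective
    (fun m n h ↦ by simpa using h : Function.Injective fun k : ℕ ↦ 2 * k + 1)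
  simpa [Function.comp_def] using h

lemma summable_etaTerm {s : ℂ} (hs : 0 < s.re) : Summable (etaTerm s) :=
  .of_norm_bounded
    ((summable_two_mul_add_one_rpow_neg (by linarith : 1 < s.re + 1)).mul_left ‖s‖)
    fun k ↦ (norm_etaTerm_le (by linarith) k).trans_eq (by ring_nf)

lemma isOpen_setOf_lt_re_and_norm_lt (δ R : ℝ) : IsOpen {s : ℂ | δ < s.re ∧ ‖s‖ < R} :=
  (isOpen_lt continuous_const continuous_re).inter (isOpen_lt continuous_norm continuous_const)

lemma differentiableOn_dirichletEta_of_pos {δ : ℝ} (hδ : 0 < δ) (R : ℝ) :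
    DifferentiableOn ℂ dirichletEta {s | δ < s.re ∧ ‖s‖ < R} := by
  refine differentiableOn_tsum_of_summable_norm
    ((summable_two_mul_add_one_rpow_neg (by linarith : 1 < δ + 1)).mul_left R)
    (fun k ↦ ?_) (isOpen_setOf_lt_re_and_norm_lt δ R) fun k s hs ↦ ?_
  · have h1 : (2 * k + 1 : ℂ) ≠ 0 := by exact_mod_cast (by omega : 2 * k + 1 ≠ 0)
    have h2 : (2 * k + 2 : ℂ) ≠ 0 := by exact_mod_cast (by omega : 2 * k + 2 ≠ 0)
    exact ((differentiable_neg.const_cpow (.inl h1)).sub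
      (differentiable_neg.const_cpow (.inl h2))).differentiableOn
  · refine (norm_etaTerm_le (by linarith [hs.1]) k).trans ?_
    rw [neg_add']
    gcongr
    · exact (norm_nonneg s).trans hs.2.le
    · exact hs.2.le
    · exact_mod_cast Nat.le_add_left 1 (2 * k)
    · exact hs.1.le

lemma differentiableOn_dirichletEta : DifferentiableOn ℂ dirichletEta {s | 0 < s.re} := by
  intro s hs
  have hU := (isOpen_setOf_lt_re_and_norm_lt (s.re / 2) (‖s‖ + 1)).mem_nhds
    ⟨half_lt_self hs, lt_add_one _⟩
  exact ((differentiableOn_dirichletEta_of_pos (half_pos hs) _).differentiableAt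
    hU).differentiableWithinAt

lemma dirichletEta_eq_of_one_lt_re {s : ℂ} (hs : 1 < s.re) :
    dirichletEta s = (1 - 2 ^ (1 - s)) * riemannZeta s := by
  set f : ℕ → ℂ := fun n ↦ (n + 1 : ℂ) ^ (-s)
  have hζ : riemannZeta s = ∑' n, f n := by
    simp [zeta_eq_tsum_one_div_nat_add_one_cpow hs, f, cpow_neg]
  have hf : Summable f := by
    have := (summable_nat_add_iff 1).2 (Complex.summable_one_div_nat_cpow.2 hs)
    simpa [f, cpow_neg] using this
  have hf_even : Summable fun k ↦ f (2 * k) :=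
    hf.comp_injective fun m n h ↦ by simpa using h
  have hf_odd : Summable fun k ↦ f (2 * k + 1) :=
    hf.comp_injective fun m n h ↦ by simpa using h
  have hodd : ∑' k, f (2 * k + 1) = 2 ^ (-s) * riemannZeta s := by
    rw [hζ, ← tsum_mul_left]
    refine tsum_congr fun k ↦ ?_
    have : ((2 * k + 1 : ℕ) : ℂ) + 1 = ((2 : ℕ) : ℂ) * ((k + 1 : ℕ) : ℂ) := by
      push_cast; ring
    simp only [f]
    rw [this, natCast_mul_natCast_cpow]
    push_cast
    ring_nf
  have hη : dirichletEta s = ∑' k, f (2 * k) - ∑' k, f (2 * k + 1) := by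
    rw [dirichletEta, ← hf_even.tsum_sub hf_odd]
    refine tsum_congr fun k ↦ ?_
    simp only [etaTerm, f]
    push_cast
    ring_nf
  have h2 : (2 : ℂ) ^ (1 - s) = 2 * 2 ^ (-s) := by
    rw [sub_eq_add_neg, cpow_add _ _ two_ne_zero, cpow_one]
  have hsplit : ∑' k, f (2 * k) + ∑' k, f (2 * k + 1) = riemannZeta s := by
    rw [tsum_even_add_odd hf_even hf_odd, hζ]
  rw [hη, h2]
  linear_combination hsplit - 2 * hodd

lemma dirichletEta_eq {s : ℂ} (hs : 0 < s.re) (hs1 : s ≠ 1) :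
    dirichletEta s = (1 - 2 ^ (1 - s)) * riemannZeta s := by
  have hΩ : IsOpen {s : ℂ | 0 < s.re} := isOpen_lt continuous_const continuous_re
  -- `ζ` has a pole at `1`, so continue the identity multiplied by `s - 1`, using the entire
  -- function `riemannZeta₁ = (s - 1) ζ`.
  have hη : AnalyticOnNhd ℂ (fun s ↦ (s - 1) * dirichletEta s) {s | 0 < s.re} :=
    ((differentiableOn_id.sub_const 1).mul differentiableOn_dirichletEta).analyticOnNhd hΩ
  have hζ : AnalyticOnNhd ℂ (fun s ↦ (1 - 2 ^ (1 - s)) * riemannZeta₁ s) {s | 0 < s.re} :=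
    DifferentiableOn.analyticOnNhd (by fun_prop) hΩ
  have hev : (fun s ↦ (s - 1) * dirichletEta s) =ᶠ[𝓝 2]
      fun s ↦ (1 - 2 ^ (1 - s)) * riemannZeta₁ s := by
    filter_upwards [(isOpen_lt continuous_const continuous_re).mem_nhds
      (by simp : (1 : ℝ) < (2 : ℂ).re)] with t ht
    have ht1 : t - 1 ≠ 0 := sub_ne_zero.2 fun h ↦ by simp [h] at ht
    rw [dirichletEta_eq_of_one_lt_re ht, riemannZeta_eq_inv_sub_mul (sub_ne_zero.1 ht1)]
    field_simp
  have := hη.eqOn_of_preconnected_of_eventuallyEq hζ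
    (convex_halfSpace_re_gt 0).isPreconnected (by simp) hev hs
  have hsub : s - 1 ≠ 0 := sub_ne_zero.2 hs1
  rw [riemannZeta_eq_inv_sub_mul hs1]
  field_simp
  linear_combination this

lemma re_dirichletEta_ofReal_pos {σ : ℝ} (hσ : 0 < σ) : 0 < (dirichletEta σ).re := by
  have hterm : ∀ k : ℕ, 0 < (etaTerm σ k).re := by
    intro k
    have h1 := ofReal_cpow (by positivity : (0 : ℝ) ≤ 2 * k + 1) (-σ)
    have h2 := ofReal_cpow (by positivity : (0 : ℝ) ≤ 2 * k + 2) (-σ)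
    push_cast at h1 h2
    rw [etaTerm, ← h1, ← h2, sub_re, ofReal_re, ofReal_re, sub_pos]
    exact Real.rpow_lt_rpow_of_neg (by positivity) (by linarith) (by linarith)
  have hsum := (hasSum_re (summable_etaTerm (by simpa using hσ : 0 < (σ : ℂ).re)).hasSum)
  rw [dirichletEta, ← hsum.tsum_eq]
  exact hsum.summable.tsum_pos (fun k ↦ (hterm k).le) 0 (hterm 0)

/-- The Riemann zeta function has no zeros on the real segment `(0, 1)`. -/
theorem stmt_5 (σ : ℝ) (h0 : 0 < σ) (h1 : σ < 1) : riemannZeta (σ : ℂ) ≠ 0 := by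
  intro hζ
  have hη := dirichletEta_eq (by simpa using h0) (ofReal_ne_one.2 h1.ne)
  rw [hζ, mul_zero] at hη
  simpa [hη] using re_dirichletEta_ofReal_pos h0
end

section
/- Half-plane argument lemma: let U ⊆ ℂ be open, let f : ℂ → ℂ be holomorphic (complex differentiable) on U, and let γ : ℝ → ℂ be continuously differentiable on [0,1] with γ(t) ∈ U, f(γ(t)) ≠ 0, and Re(f(γ(t))) > 0 for all t ∈ [0,1]. Then Im ∫₀¹ (f′(γ(t)) · γ′(t) / f(γ(t))) dt = arg(f(γ(1))) − arg(f(γ(0))); in particular, the absolute value of this imaginary part is strictly less than π. -/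
/-!
On the right half-plane the principal logarithm is holomorphic, so `t ↦ log (f (γ t))` is a
primitive of the integrand and the integral equals `log (f (γ 1)) - log (f (γ 0))`, whose imaginary
part is the difference of arguments. Both arguments lie in `(-π/2, π/2)`.
-/

open Complex intervalIntegral Set MeasureTheory

lemma IntervalIntegrable.of_eqOn_Ioo {E : Type*} [NormedAddCommGroup E] {g h : ℝ → E} {a b : ℝ}
    (hab : a ≤ b) (hh : ContinuousOn h (Icc a b)) (hgh : EqOn g h (Ioo a b)) :
    IntervalIntegrable g volume a b := by
  rw [intervalIntegrable_iff_integrableOn_Ioo_of_le hab]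
  exact (hh.integrableOn_Icc.mono_set Ioo_subset_Icc_self).congr_fun hgh.symm measurableSet_Ioo

theorem integral_logDeriv_comp_eq_log_sub_log {U : Set ℂ} (hU : IsOpen U) {f : ℂ → ℂ}
    (hf : DifferentiableOn ℂ f U) {γ : ℝ → ℂ} {a b : ℝ} (hab : a ≤ b)
    (hγ : ContDiffOn ℝ 1 γ (Icc a b)) (hmem : MapsTo γ (Icc a b) U)
    (hslit : ∀ t ∈ Icc a b, f (γ t) ∈ slitPlane) :
    ∫ t in a..b, deriv f (γ t) * deriv γ t / f (γ t) = log (f (γ b)) - log (f (γ a)) := by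
  rcases hab.eq_or_lt with rfl | hab
  · simp
  have hfγ : ContinuousOn (fun t => f (γ t)) (Icc a b) :=
    hf.continuousOn.comp hγ.continuousOn hmem
  apply integral_eq_sub_of_hasDerivAt_of_le hab.le (hfγ.clog hslit)
  · intro t ht
    have hγt : HasDerivAt γ (deriv γ t) t :=
      ((hγ.differentiableOn one_ne_zero t (Ioo_subset_Icc_self ht)).differentiableAt
        (Icc_mem_nhds ht.1 ht.2)).hasDerivAt
    have hft : HasDerivAt f (deriv f (γ t)) (γ t) :=
      (hf.differentiableAt (hU.mem_nhds (hmem (Ioo_subset_Icc_self ht)))).hasDerivAt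
    exact (hft.comp t hγt).clog_real (hslit t (Ioo_subset_Icc_self ht))
  · -- `deriv γ` is only known to be continuous on the open interval; at the endpoints use
    -- the one-sided derivative, which is continuous on the closed one.
    refine IntervalIntegrable.of_eqOn_Ioo (h := fun t => deriv f (γ t) *
      derivWithin γ (Icc a b) t / f (γ t)) hab.le ?_ fun t ht => ?_
    · refine ContinuousOn.div ?_ hfγ fun t ht => slitPlane_ne_zero (hslit t ht)
      exact ((hf.analyticOnNhd hU).deriv.continuousOn.comp hγ.continuousOn hmem).mul
        (hγ.continuousOn_derivWithin (uniqueDiffOn_Icc hab) le_rfl)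
    · simp only [derivWithin_of_mem_nhds (Icc_mem_nhds ht.1 ht.2)]

lemma abs_arg_sub_arg_lt_pi {z w : ℂ} (hz : 0 < z.re) (hw : 0 < w.re) :
    |arg z - arg w| < Real.pi := by
  have hz' := abs_arg_lt_pi_div_two_iff.2 (Or.inl hz)
  have hw' := abs_arg_lt_pi_div_two_iff.2 (Or.inl hw)
  rw [abs_lt] at hz' hw' ⊢
  constructor <;> linarith

theorem stmt_6_general (U : Set ℂ) (hU : IsOpen U) (f : ℂ → ℂ) (hf : DifferentiableOn ℂ f U)
    (γ : ℝ → ℂ) (hγ : ContDiffOn ℝ 1 γ (Set.Icc 0 1))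
    (hmem : ∀ t ∈ Set.Icc (0 : ℝ) 1, γ t ∈ U)
    (hre : ∀ t ∈ Set.Icc (0 : ℝ) 1, 0 < (f (γ t)).re) :
    (∫ t in (0 : ℝ)..1, deriv f (γ t) * deriv γ t / f (γ t)).im
        = (f (γ 1)).arg - (f (γ 0)).arg ∧
      |(∫ t in (0 : ℝ)..1, deriv f (γ t) * deriv γ t / f (γ t)).im| < Real.pi := by
  have him : (∫ t in (0 : ℝ)..1, deriv f (γ t) * deriv γ t / f (γ t)).im
      = (f (γ 1)).arg - (f (γ 0)).arg := by
    rw [integral_logDeriv_comp_eq_log_sub_log hU hf zero_le_one hγ hmem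
      fun t ht => Or.inl (hre t ht), sub_im, log_im, log_im]
  refine ⟨him, him ▸ abs_arg_sub_arg_lt_pi (hre 1 ?_) (hre 0 ?_)⟩ <;> simp

/-- Half-plane argument lemma: if `f` is holomorphic on an open set `U` and `γ` is a `C¹`
path in `U` on which `f` is nonvanishing with values in the right half-plane
`Re > 0`, then the imaginary part of `∫₀¹ f′(γ t) · γ′(t) / f(γ t) dt` equals
`arg (f (γ 1)) - arg (f (γ 0))`; in particular its absolute value is less than `π`. -/
theorem stmt_6 (U : Set ℂ) (hU : IsOpen U) (f : ℂ → ℂ) (hf : DifferentiableOn ℂ f U)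
    (γ : ℝ → ℂ) (hγ : ContDiffOn ℝ 1 γ (Set.Icc 0 1))
    (hmem : ∀ t ∈ Set.Icc (0 : ℝ) 1, γ t ∈ U)
    (hne : ∀ t ∈ Set.Icc (0 : ℝ) 1, f (γ t) ≠ 0)
    (hre : ∀ t ∈ Set.Icc (0 : ℝ) 1, 0 < (f (γ t)).re) :
    (∫ t in (0 : ℝ)..1, deriv f (γ t) * deriv γ t / f (γ t)).im
        = (f (γ 1)).arg - (f (γ 0)).arg ∧
      |(∫ t in (0 : ℝ)..1, deriv f (γ t) * deriv γ t / f (γ t)).im| < Real.pi :=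
  stmt_6_general U hU f hf γ hγ hmem hre
end

section
/- Backlund's bound for the contour C₁: let σ₀ > 1 and T > 0 be real numbers. Assume that Re(ζ(σ₀ + it)) ≠ 0 for all t ∈ [0, T], and that ζ(x + iT) ≠ 0 and Re(ζ(x + iT)) ≠ 0 for all x ∈ [1/2, σ₀]. Then |Im( ∫₀^T i · ζ′(σ₀ + it)/ζ(σ₀ + it) dt + ∫_{σ₀}^{1/2} ζ′(x + iT)/ζ(x + iT) dx )| < π/2. (Hence the correction term (1/π)·Im ∫_{C₁} ζ′/ζ ds in Backlund's formula lies strictly between −1/2 and 1/2.) -/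
open Complex intervalIntegral

private lemma zeta_real_eq (σ : ℝ) (hσ : 1 < σ) :
    riemannZeta σ = ((∑' n : ℕ, 1 / ((n : ℝ) + 1) ^ σ : ℝ) : ℂ) := by
  rw [zeta_eq_tsum_one_div_nat_add_one_cpow (by simpa using hσ), Complex.ofReal_tsum]
  refine tsum_congr fun n => ?_
  rw [Complex.ofReal_div, Complex.ofReal_one, Complex.ofReal_cpow (by positivity)]
  norm_cast

private lemma zeta_tsum_pos (σ : ℝ) (hσ : 1 < σ) :
    0 < ∑' n : ℕ, 1 / ((n : ℝ) + 1) ^ σ := by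
  have hsum : Summable (fun n : ℕ => 1 / ((n : ℝ) + 1) ^ σ) := by
    have h1 := (Real.summable_one_div_nat_rpow (p := σ)).mpr hσ
    have h2 := (summable_nat_add_iff 1).mpr h1
    simpa using h2
  exact Summable.tsum_pos hsum (fun n => by positivity) 0 (by positivity)

/-- Backlund's bound for the contour `C₁` (vertical segment from `σ₀` to `σ₀ + iT`
followed by the horizontal segment from `σ₀ + iT` to `1/2 + iT`): if the real part of
`ζ` does not vanish along the contour (and `ζ` itself does not vanish on the horizontal
part), then the imaginary part of `∫_{C₁} ζ′/ζ ds` is less than `π/2` in absolute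
value. -/
theorem stmt_7 (σ₀ T : ℝ) (hσ₀ : 1 < σ₀) (hT : 0 < T)
    (hvert : ∀ t ∈ Set.Icc (0 : ℝ) T,
      (riemannZeta (σ₀ + t * Complex.I)).re ≠ 0)
    (hhor : ∀ x ∈ Set.Icc (1 / 2 : ℝ) σ₀,
      riemannZeta (x + T * Complex.I) ≠ 0 ∧ (riemannZeta (x + T * Complex.I)).re ≠ 0) :
    |((∫ t in (0 : ℝ)..T,
          Complex.I * deriv riemannZeta (σ₀ + t * Complex.I) /
            riemannZeta (σ₀ + t * Complex.I)) +
        ∫ x in σ₀..(1 / 2 : ℝ),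
          deriv riemannZeta (x + T * Complex.I) /
            riemannZeta (x + T * Complex.I)).im| < Real.pi / 2 := by
  have hhalf : (1 / 2 : ℝ) ≤ σ₀ := by linarith
  -- the path points are never 1
  have hne1v : ∀ t : ℝ, (σ₀ : ℂ) + t * I ≠ 1 := by
    intro t h
    have := congrArg Complex.re h
    simp at this
    linarith
  have hne1h : ∀ x : ℝ, (x : ℂ) + T * I ≠ 1 := by
    intro x h
    have := congrArg Complex.im h
    simp at this
    linarith
  -- continuity of paths
  have hpathv : Continuous (fun t : ℝ => (σ₀ : ℂ) + t * I) :=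
    continuous_const.add (Complex.continuous_ofReal.mul continuous_const)
  have hpathh : Continuous (fun x : ℝ => (x : ℂ) + T * I) :=
    (Complex.continuous_ofReal).add continuous_const
  -- analyticity of deriv ζ off 1
  have hanal : AnalyticOnNhd ℂ riemannZeta {(1 : ℂ)}ᶜ :=
    (analyticOnNhd_iff_differentiableOn isOpen_compl_singleton).mpr
      (fun s hs => (differentiableAt_riemannZeta hs).differentiableWithinAt)
  have hderivCont : ∀ s : ℂ, s ≠ 1 → ContinuousAt (deriv riemannZeta) s := fun s hs =>
    ((hanal.deriv_of_isOpen isOpen_compl_singleton) s hs).continuousAt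
  have hzcv : ∀ t : ℝ, ContinuousAt (fun t : ℝ => riemannZeta ((σ₀ : ℂ) + t * I)) t :=
    fun t => ContinuousAt.comp (g := riemannZeta) (f := fun t : ℝ => (σ₀ : ℂ) + t * I)
      (differentiableAt_riemannZeta (hne1v t)).continuousAt hpathv.continuousAt
  have hzch : ∀ x : ℝ, ContinuousAt (fun x : ℝ => riemannZeta ((x : ℂ) + T * I)) x :=
    fun x => ContinuousAt.comp (g := riemannZeta) (f := fun x : ℝ => (x : ℂ) + T * I)
      (differentiableAt_riemannZeta (hne1h x)).continuousAt hpathh.continuousAt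
  have hdcv : ∀ t : ℝ, ContinuousAt (fun t : ℝ => deriv riemannZeta ((σ₀ : ℂ) + t * I)) t :=
    fun t => ContinuousAt.comp (g := deriv riemannZeta) (f := fun t : ℝ => (σ₀ : ℂ) + t * I)
      (hderivCont _ (hne1v t)) hpathv.continuousAt
  have hdch : ∀ x : ℝ, ContinuousAt (fun x : ℝ => deriv riemannZeta ((x : ℂ) + T * I)) x :=
    fun x => ContinuousAt.comp (g := deriv riemannZeta) (f := fun x : ℝ => (x : ℂ) + T * I)
      (hderivCont _ (hne1h x)) hpathh.continuousAt
  have hcontv : ContinuousOn (fun t : ℝ => (riemannZeta ((σ₀ : ℂ) + t * I)).re)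
      (Set.Icc 0 T) := fun t _ =>
    (Complex.continuous_re.continuousAt.comp (hzcv t)).continuousWithinAt
  have hconth : ContinuousOn (fun x : ℝ => (riemannZeta ((x : ℂ) + T * I)).re)
      (Set.Icc (1 / 2 : ℝ) σ₀) := fun x _ =>
    (Complex.continuous_re.continuousAt.comp (hzch x)).continuousWithinAt
  -- base positivity at σ₀
  have hbase : 0 < (riemannZeta ((σ₀ : ℂ) + (0 : ℝ) * I)).re := by
    have : ((σ₀ : ℂ) + (0 : ℝ) * I) = (σ₀ : ℂ) := by simp
    rw [this, zeta_real_eq σ₀ hσ₀]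
    simpa using zeta_tsum_pos σ₀ hσ₀
  -- positivity propagates along the vertical segment
  have hposv : ∀ t ∈ Set.Icc (0 : ℝ) T, 0 < (riemannZeta ((σ₀ : ℂ) + t * I)).re := by
    intro t ht
    rcases lt_or_ge 0 ((riemannZeta ((σ₀ : ℂ) + t * I)).re) with h | h
    · exact h
    exfalso
    have hlt : (riemannZeta ((σ₀ : ℂ) + t * I)).re < 0 :=
      lt_of_le_of_ne h (hvert t ht)
    have hsub : Set.Icc (0 : ℝ) t ⊆ Set.Icc 0 T := Set.Icc_subset_Icc le_rfl ht.2
    have hmem : (0 : ℝ) ∈ Set.Icc ((riemannZeta ((σ₀ : ℂ) + t * I)).re)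
        ((riemannZeta ((σ₀ : ℂ) + (0 : ℝ) * I)).re) := ⟨hlt.le, hbase.le⟩
    obtain ⟨u, hu, hu0⟩ := intermediate_value_Icc' ht.1 (hcontv.mono hsub) hmem
    exact hvert u (hsub hu) hu0
  -- positivity propagates along the horizontal segment
  have hbaseh : 0 < (riemannZeta ((σ₀ : ℂ) + T * I)).re := hposv T ⟨hT.le, le_rfl⟩
  have hposh : ∀ x ∈ Set.Icc (1 / 2 : ℝ) σ₀,
      0 < (riemannZeta ((x : ℂ) + T * I)).re := by
    intro x hx
    rcases lt_or_ge 0 ((riemannZeta ((x : ℂ) + T * I)).re) with h | h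
    · exact h
    exfalso
    have hlt : (riemannZeta ((x : ℂ) + T * I)).re < 0 :=
      lt_of_le_of_ne h (hhor x hx).2
    have hsub : Set.Icc x σ₀ ⊆ Set.Icc (1 / 2 : ℝ) σ₀ := Set.Icc_subset_Icc hx.1 le_rfl
    have hmem : (0 : ℝ) ∈ Set.Icc ((riemannZeta ((x : ℂ) + T * I)).re)
        ((riemannZeta ((σ₀ : ℂ) + T * I)).re) := ⟨hlt.le, hbaseh.le⟩
    obtain ⟨u, hu, hu0⟩ := intermediate_value_Icc hx.2 (hconth.mono hsub) hmem
    exact (hhor u (hsub hu)).2 hu0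
  -- nonvanishing of ζ along both segments
  have hnev : ∀ t ∈ Set.Icc (0 : ℝ) T, riemannZeta ((σ₀ : ℂ) + t * I) ≠ 0 := by
    intro t ht h
    have := hposv t ht
    rw [h] at this
    simp at this
  -- FTC on the vertical segment
  have hderivv : ∀ t ∈ Set.uIcc (0 : ℝ) T,
      HasDerivAt (fun t : ℝ => Complex.log (riemannZeta ((σ₀ : ℂ) + t * I)))
        (Complex.I * deriv riemannZeta ((σ₀ : ℂ) + t * I) /
          riemannZeta ((σ₀ : ℂ) + t * I)) t := by
    intro t ht
    rw [Set.uIcc_of_le hT.le] at ht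
    have hs : HasDerivAt (fun t : ℝ => (σ₀ : ℂ) + t * I) I t := by
      simpa using (((hasDerivAt_id ((t : ℝ) : ℂ)).comp_ofReal).mul_const I).const_add (σ₀ : ℂ)
    have hz := (differentiableAt_riemannZeta (hne1v t)).hasDerivAt
    have hcomp := hz.comp t hs
    have hlog := hcomp.clog_real (Or.inl (hposv t ht))
    have heq : Complex.I * deriv riemannZeta ((σ₀ : ℂ) + t * I) /
        riemannZeta ((σ₀ : ℂ) + t * I) =
        deriv riemannZeta ((σ₀ : ℂ) + t * I) * I / riemannZeta ((σ₀ : ℂ) + t * I) := by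
      ring
    rw [heq]
    exact hlog
  have hintv : IntervalIntegrable
      (fun t : ℝ => Complex.I * deriv riemannZeta ((σ₀ : ℂ) + t * I) /
        riemannZeta ((σ₀ : ℂ) + t * I)) MeasureTheory.volume 0 T := by
    apply ContinuousOn.intervalIntegrable
    rw [Set.uIcc_of_le hT.le]
    refine (continuousOn_const.mul (fun t _ => ?_)).div (fun t _ => ?_) (fun t ht => hnev t ht)
    · exact (hdcv t).continuousWithinAt
    · exact (hzcv t).continuousWithinAt
  have hIv := integral_eq_sub_of_hasDerivAt hderivv hintv
  -- FTC on the horizontal segment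
  have huh : Set.uIcc σ₀ (1 / 2 : ℝ) = Set.Icc (1 / 2 : ℝ) σ₀ := Set.uIcc_of_ge hhalf
  have hderivh : ∀ x ∈ Set.uIcc σ₀ (1 / 2 : ℝ),
      HasDerivAt (fun x : ℝ => Complex.log (riemannZeta ((x : ℂ) + T * I)))
        (deriv riemannZeta ((x : ℂ) + T * I) / riemannZeta ((x : ℂ) + T * I)) x := by
    intro x hx
    rw [huh] at hx
    have hs : HasDerivAt (fun x : ℝ => (x : ℂ) + T * I) 1 x := by
      simpa using ((hasDerivAt_id ((x : ℝ) : ℂ)).comp_ofReal).add_const ((T : ℂ) * I)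
    have hz := (differentiableAt_riemannZeta (hne1h x)).hasDerivAt
    have hcomp := hz.comp x hs
    have hlog := hcomp.clog_real (Or.inl (hposh x hx))
    have heq : deriv riemannZeta ((x : ℂ) + T * I) / riemannZeta ((x : ℂ) + T * I) =
        deriv riemannZeta ((x : ℂ) + T * I) * 1 / riemannZeta ((x : ℂ) + T * I) := by
      ring
    rw [heq]
    exact hlog
  have hinth : IntervalIntegrable
      (fun x : ℝ => deriv riemannZeta ((x : ℂ) + T * I) /
        riemannZeta ((x : ℂ) + T * I)) MeasureTheory.volume σ₀ (1 / 2 : ℝ) := by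
    apply ContinuousOn.intervalIntegrable
    rw [huh]
    refine ContinuousOn.div (fun x _ => ?_) (fun x _ => ?_) (fun x hx => (hhor x hx).1)
    · exact (hdch x).continuousWithinAt
    · exact (hzch x).continuousWithinAt
  have hIh := integral_eq_sub_of_hasDerivAt hderivh hinth
  -- put everything together
  rw [hIv, hIh]
  have hσT : ((σ₀ : ℂ) + (T : ℝ) * I) = ((σ₀ : ℝ) : ℂ) + T * I := by norm_cast
  have key : (Complex.log (riemannZeta ((σ₀ : ℂ) + (T : ℝ) * I)) -
        Complex.log (riemannZeta ((σ₀ : ℂ) + (0 : ℝ) * I)) +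
      (Complex.log (riemannZeta (((1 / 2 : ℝ) : ℂ) + T * I)) -
        Complex.log (riemannZeta (((σ₀ : ℝ) : ℂ) + T * I)))) =
      Complex.log (riemannZeta (((1 / 2 : ℝ) : ℂ) + T * I)) -
        Complex.log (riemannZeta ((σ₀ : ℂ) + (0 : ℝ) * I)) := by
    rw [hσT]; ring
  rw [key]
  have h0 : ((σ₀ : ℂ) + (0 : ℝ) * I) = (σ₀ : ℂ) := by simp
  rw [Complex.sub_im, Complex.log_im, Complex.log_im, h0]
  have harg0 : Complex.arg (riemannZeta (σ₀ : ℂ)) = 0 := by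
    rw [zeta_real_eq σ₀ hσ₀]
    exact Complex.arg_ofReal_of_nonneg (zeta_tsum_pos σ₀ hσ₀).le
  rw [harg0, sub_zero]
  exact Complex.abs_arg_lt_pi_div_two_iff.mpr
    (Or.inl (hposh (1 / 2 : ℝ) ⟨le_rfl, hhalf⟩))
end

section
/- Bound for the contour C₂: let σ₀ > 1, T > 0 and 0 < δ < T be real numbers. Assume that for each of the two heights T₊ = T + δ and T₋ = T − δ the following holds: Re(ζ(σ₀ + it)) ≠ 0 for all t ∈ [0, T₊] (respectively [0, T₋]), and ζ(x + iT₊) ≠ 0, Re(ζ(x + iT₊)) ≠ 0, ζ(x + iT₋) ≠ 0, Re(ζ(x + iT₋)) ≠ 0 for all x ∈ [1/2, σ₀]. Then |Im( ∫₀^{T₊} i·ζ′(σ₀+it)/ζ(σ₀+it) dt + ∫_{σ₀}^{1/2} ζ′(x+iT₊)/ζ(x+iT₊) dx ) − Im( ∫₀^{T₋} i·ζ′(σ₀+it)/ζ(σ₀+it) dt + ∫_{σ₀}^{1/2} ζ′(x+iT₋)/ζ(x+iT₋) dx )| < π. -/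
open Complex intervalIntegral

/-!
At `σ₀ > 1` the value `ζ(σ₀)` is a positive real. Since `Re ζ` does not vanish on the
contour `C₁(h)`, the intermediate value theorem keeps `Re ζ > 0` along both of its segments,
so the principal logarithm is a primitive of `ζ′/ζ` along `C₁(h)` and
`Im ∫_{C₁(h)} ζ′/ζ = arg ζ(1/2 + ih) ∈ (-π/2, π/2)`. Two such values differ by less than `π`.
-/

open scoped ComplexOrder

theorem IsPreconnected.pos_of_forall_ne_zero {X : Type*} [TopologicalSpace X] {s : Set X}
    (hs : IsPreconnected s) {f : X → ℝ} (hf : ContinuousOn f s) {c : X} (hc : c ∈ s)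
    (hfc : 0 < f c) (hne : ∀ x ∈ s, f x ≠ 0) {x : X} (hx : x ∈ s) : 0 < f x := by
  by_contra! hneg
  obtain ⟨y, hy, hy0⟩ := hs.intermediate_value hx hc hf ⟨hneg, hfc.le⟩
  exact hne y hy hy0

theorem riemannZeta_ofReal_pos {σ : ℝ} (hσ : 1 < σ) : 0 < riemannZeta σ := by
  rw [← LSeries_one_eq_riemannZeta (by simpa using hσ)]
  exact LSeries.positive (a := 1) (fun _ ↦ zero_le_one) zero_lt_one
    (by rw [LSeries.abscissaOfAbsConv_one]; exact_mod_cast hσ)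

theorem integral_mul_deriv_div_eq_log_sub {f : ℂ → ℂ} {U : Set ℂ} (hU : IsOpen U)
    (hf : DifferentiableOn ℂ f U) {γ γ' : ℝ → ℂ} {a b : ℝ}
    (hγ : ∀ t ∈ Set.uIcc a b, HasDerivAt γ (γ' t) t) (hγ' : ContinuousOn γ' (Set.uIcc a b))
    (hγU : Set.MapsTo γ (Set.uIcc a b) U) (hslit : ∀ t ∈ Set.uIcc a b, f (γ t) ∈ slitPlane) :
    ∫ t in a..b, γ' t * deriv f (γ t) / f (γ t) = log (f (γ b)) - log (f (γ a)) := by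
  have hfγ : ∀ t ∈ Set.uIcc a b, HasDerivAt f (deriv f (γ t)) (γ t) := fun t ht ↦
    (hf.differentiableAt (hU.mem_nhds (hγU ht))).hasDerivAt
  have hγc : ContinuousOn γ (Set.uIcc a b) := fun t ht ↦
    (hγ t ht).continuousAt.continuousWithinAt
  refine integral_eq_sub_of_hasDerivAt (f := fun t ↦ log (f (γ t))) (fun t ht ↦ ?_) ?_
  · exact (((hfγ t ht).comp t (hγ t ht)).clog_real (hslit t ht)).congr_deriv
      (by simp only [Function.comp_apply]; ring)
  · exact ContinuousOn.intervalIntegrable <|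
      (hγ'.mul ((hf.deriv hU).continuousOn.comp hγc hγU)).div
        (hf.continuousOn.comp hγc hγU) fun t ht ↦ slitPlane_ne_zero (hslit t ht)

theorem ofReal_add_ofReal_mul_I_ne_one {x y : ℝ} (h : x ≠ 1 ∨ y ≠ 0) :
    (x : ℂ) + y * I ≠ 1 := by
  intro he
  rcases h with hx | hy
  · exact hx (by simpa using congrArg re he)
  · exact hy (by simpa using congrArg im he)

theorem continuousOn_re_riemannZeta_comp {s : Set ℝ} {γ : ℝ → ℂ} (hγ : Continuous γ)
    (h1 : ∀ t ∈ s, γ t ≠ 1) : ContinuousOn (fun t ↦ (riemannZeta (γ t)).re) s := fun t ht ↦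
  (continuous_re.continuousAt.comp
    ((differentiableAt_riemannZeta (h1 t ht)).continuousAt.comp hγ.continuousAt)).continuousWithinAt

noncomputable def logDerivZetaIntegralC₁ (σ₀ h : ℝ) : ℂ :=
  (∫ t in (0 : ℝ)..h, I * deriv riemannZeta (σ₀ + t * I) / riemannZeta (σ₀ + t * I)) +
    ∫ x in σ₀..(1 / 2 : ℝ), deriv riemannZeta (x + h * I) / riemannZeta (x + h * I)

section ContourC₁

variable {σ₀ h : ℝ}

theorem re_riemannZeta_vertical_pos (hσ₀ : 1 < σ₀)
    (hvert : ∀ t ∈ Set.Icc (0 : ℝ) h, (riemannZeta (σ₀ + t * I)).re ≠ 0) {t : ℝ}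
    (ht : t ∈ Set.Icc 0 h) : 0 < (riemannZeta (σ₀ + t * I)).re := by
  refine isPreconnected_Icc.pos_of_forall_ne_zero
    (continuousOn_re_riemannZeta_comp (by fun_prop)
      fun t _ ↦ ofReal_add_ofReal_mul_I_ne_one (.inl hσ₀.ne'))
    (Set.left_mem_Icc.2 (ht.1.trans ht.2)) ?_ hvert ht
  simpa using (pos_iff.1 (riemannZeta_ofReal_pos hσ₀)).1

theorem re_riemannZeta_horizontal_pos (hσ₀ : 1 < σ₀) (hh : 0 < h)
    (hvert : ∀ t ∈ Set.Icc (0 : ℝ) h, (riemannZeta (σ₀ + t * I)).re ≠ 0)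
    (hhor : ∀ x ∈ Set.Icc (1 / 2 : ℝ) σ₀, (riemannZeta (x + h * I)).re ≠ 0) {x : ℝ}
    (hx : x ∈ Set.Icc (1 / 2) σ₀) : 0 < (riemannZeta (x + h * I)).re :=
  isPreconnected_Icc.pos_of_forall_ne_zero (f := fun x : ℝ ↦ (riemannZeta (x + h * I)).re)
    (continuousOn_re_riemannZeta_comp (by fun_prop)
      fun _ _ ↦ ofReal_add_ofReal_mul_I_ne_one (.inr hh.ne'))
    (Set.right_mem_Icc.2 (by linarith))
    (re_riemannZeta_vertical_pos hσ₀ hvert (Set.right_mem_Icc.2 hh.le)) hhor hx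

theorem logDerivZetaIntegralC₁_im (hσ₀ : 1 < σ₀) (hh : 0 < h)
    (hvert : ∀ t ∈ Set.Icc (0 : ℝ) h, (riemannZeta (σ₀ + t * I)).re ≠ 0)
    (hhor : ∀ x ∈ Set.Icc (1 / 2 : ℝ) σ₀, (riemannZeta (x + h * I)).re ≠ 0) :
    (logDerivZetaIntegralC₁ σ₀ h).im = arg (riemannZeta ((1 / 2 : ℝ) + h * I)) := by
  have hU : IsOpen ({1}ᶜ : Set ℂ) := isOpen_compl_singleton
  have hζ : DifferentiableOn ℂ riemannZeta {1}ᶜ := fun s hs ↦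
    (differentiableAt_riemannZeta hs).differentiableWithinAt
  have hvertical := integral_mul_deriv_div_eq_log_sub hU hζ
    (γ := fun t : ℝ ↦ (σ₀ : ℂ) + t * I) (γ' := fun _ ↦ I) (a := 0) (b := h)
    (fun t _ ↦ by simpa using ((hasDerivAt_id t).ofReal_comp.mul_const I).const_add (σ₀ : ℂ))
    continuousOn_const (fun t _ ↦ ofReal_add_ofReal_mul_I_ne_one (.inl hσ₀.ne'))
    fun t ht ↦ .inl (re_riemannZeta_vertical_pos hσ₀ hvert (by rwa [Set.uIcc_of_le hh.le] at ht))
  have hhorizontal := integral_mul_deriv_div_eq_log_sub hU hζ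
    (γ := fun x : ℝ ↦ (x : ℂ) + h * I) (γ' := fun _ ↦ 1) (a := σ₀) (b := 1 / 2)
    (fun x _ ↦ (hasDerivAt_id x).ofReal_comp.add_const _)
    continuousOn_const (fun x _ ↦ ofReal_add_ofReal_mul_I_ne_one (.inr hh.ne'))
    fun x hx ↦ .inl (re_riemannZeta_horizontal_pos hσ₀ hh hvert hhor
      (by rwa [Set.uIcc_of_ge (by linarith)] at hx))
  simp only [one_mul] at hhorizontal
  rw [logDerivZetaIntegralC₁, hvertical, hhorizontal]
  simp [log_im, arg_eq_zero_iff_zero_le.2 (riemannZeta_ofReal_pos hσ₀).le]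

theorem abs_logDerivZetaIntegralC₁_im_lt (hσ₀ : 1 < σ₀) (hh : 0 < h)
    (hvert : ∀ t ∈ Set.Icc (0 : ℝ) h, (riemannZeta (σ₀ + t * I)).re ≠ 0)
    (hhor : ∀ x ∈ Set.Icc (1 / 2 : ℝ) σ₀, (riemannZeta (x + h * I)).re ≠ 0) :
    |(logDerivZetaIntegralC₁ σ₀ h).im| < Real.pi / 2 := by
  rw [logDerivZetaIntegralC₁_im hσ₀ hh hvert hhor, abs_arg_lt_pi_div_two_iff]
  exact .inl (re_riemannZeta_horizontal_pos hσ₀ hh hvert hhor ⟨le_rfl, by linarith⟩)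

end ContourC₁

theorem stmt_8_general (σ₀ T δ : ℝ) (hσ₀ : 1 < σ₀) (hδ : 0 < δ) (hδT : δ < T)
    (hvertP : ∀ t ∈ Set.Icc (0 : ℝ) (T + δ),
      (riemannZeta (σ₀ + t * Complex.I)).re ≠ 0)
    (hvertM : ∀ t ∈ Set.Icc (0 : ℝ) (T - δ),
      (riemannZeta (σ₀ + t * Complex.I)).re ≠ 0)
    (hhorP : ∀ x ∈ Set.Icc (1 / 2 : ℝ) σ₀,
      riemannZeta (x + (T + δ) * Complex.I) ≠ 0 ∧
        (riemannZeta (x + (T + δ) * Complex.I)).re ≠ 0)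
    (hhorM : ∀ x ∈ Set.Icc (1 / 2 : ℝ) σ₀,
      riemannZeta (x + (T - δ) * Complex.I) ≠ 0 ∧
        (riemannZeta (x + (T - δ) * Complex.I)).re ≠ 0) :
    |((∫ t in (0 : ℝ)..(T + δ),
          Complex.I * deriv riemannZeta (σ₀ + t * Complex.I) /
            riemannZeta (σ₀ + t * Complex.I)) +
        ∫ x in σ₀..(1 / 2 : ℝ),
          deriv riemannZeta (x + (T + δ) * Complex.I) /
            riemannZeta (x + (T + δ) * Complex.I)).im -
      ((∫ t in (0 : ℝ)..(T - δ),
          Complex.I * deriv riemannZeta (σ₀ + t * Complex.I) /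
            riemannZeta (σ₀ + t * Complex.I)) +
        ∫ x in σ₀..(1 / 2 : ℝ),
          deriv riemannZeta (x + (T - δ) * Complex.I) /
            riemannZeta (x + (T - δ) * Complex.I)).im| < Real.pi := by
  have hP := abs_logDerivZetaIntegralC₁_im_lt hσ₀ (by linarith : 0 < T + δ) hvertP
    fun x hx ↦ by push_cast; exact (hhorP x hx).2
  have hM := abs_logDerivZetaIntegralC₁_im_lt hσ₀ (by linarith : 0 < T - δ) hvertM
    fun x hx ↦ by push_cast; exact (hhorM x hx).2
  simp only [logDerivZetaIntegralC₁, ofReal_add, ofReal_sub] at hP hM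
  exact (abs_sub _ _).trans_lt (by linarith)

/-- Bound for the contour `C₂`, the difference of the contours `C₁(T + δ)` and
`C₁(T - δ)`: under Backlund's nonvanishing hypotheses at both heights, the imaginary
part of `∫_{C₂} ζ′/ζ ds` is less than `π` in absolute value. -/
theorem stmt_8 (σ₀ T δ : ℝ) (hσ₀ : 1 < σ₀) (hT : 0 < T) (hδ : 0 < δ) (hδT : δ < T)
    (hvertP : ∀ t ∈ Set.Icc (0 : ℝ) (T + δ),
      (riemannZeta (σ₀ + t * Complex.I)).re ≠ 0)
    (hvertM : ∀ t ∈ Set.Icc (0 : ℝ) (T - δ),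
      (riemannZeta (σ₀ + t * Complex.I)).re ≠ 0)
    (hhorP : ∀ x ∈ Set.Icc (1 / 2 : ℝ) σ₀,
      riemannZeta (x + (T + δ) * Complex.I) ≠ 0 ∧
        (riemannZeta (x + (T + δ) * Complex.I)).re ≠ 0)
    (hhorM : ∀ x ∈ Set.Icc (1 / 2 : ℝ) σ₀,
      riemannZeta (x + (T - δ) * Complex.I) ≠ 0 ∧
        (riemannZeta (x + (T - δ) * Complex.I)).re ≠ 0) :
    |((∫ t in (0 : ℝ)..(T + δ),
          Complex.I * deriv riemannZeta (σ₀ + t * Complex.I) /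
            riemannZeta (σ₀ + t * Complex.I)) +
        ∫ x in σ₀..(1 / 2 : ℝ),
          deriv riemannZeta (x + (T + δ) * Complex.I) /
            riemannZeta (x + (T + δ) * Complex.I)).im -
      ((∫ t in (0 : ℝ)..(T - δ),
          Complex.I * deriv riemannZeta (σ₀ + t * Complex.I) /
            riemannZeta (σ₀ + t * Complex.I)) +
        ∫ x in σ₀..(1 / 2 : ℝ),
          deriv riemannZeta (x + (T - δ) * Complex.I) /
            riemannZeta (x + (T - δ) * Complex.I)).im| < Real.pi :=
  stmt_8_general σ₀ T δ hσ₀ hδ hδT hvertP hvertM hhorP hhorM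
end
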